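/- Every function of bounded variation f on [a,b] is RDS integrable with respect to every α of bounded variation on [a,b]. -/

import Mathlib

open Set Filter Topology
open scoped Classical

noncomputable section

/-- A partition `a = x 0 < x 1 < ... < x n = b` of `[a,b]`. -/
structure RDSPartition (a b : ℝ) where
  n : ℕ
  x : ℕ → ℝ
  mono : ∀ i, i < n → x i < x (i + 1)
  first : x 0 = a
  last : x n = b

/-- Right limit `α(t+)`, with the convention `α(b+) = α(b)` at the right endpoint. -/
def rLim (b : ℝ) (α : ℝ → ℝ) (t : ℝ) : ℝ :=
  if t < b then Function.rightLim α t else α t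

/-- Left limit `α(t-)`, with the convention `α(a-) = α(a)` at the left endpoint. -/
def lLim (a : ℝ) (α : ℝ → ℝ) (t : ℝ) : ℝ :=
  if a < t then Function.leftLim α t else α t

/-- `α`-length of the singleton `{t}` inside `[a,b]`: `α(t+) - α(t-)`. -/
def muPt (a b : ℝ) (α : ℝ → ℝ) (t : ℝ) : ℝ :=
  rLim b α t - lLim a α t

/-- `α`-length of the open interval `(c,d)` inside `[a,b]`: `α(d-) - α(c+)`. -/
def muIoo (a b : ℝ) (α : ℝ → ℝ) (c d : ℝ) : ℝ :=
  lLim a α d - rLim b α c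

/-- `f` is a step function with respect to the partition `P`: it is constant on each
open subinterval `(x (i-1), x i)` of `P`. -/
def IsStepOn (a b : ℝ) (f : ℝ → ℝ) (P : RDSPartition a b) : Prop :=
  ∀ i, i < P.n → ∀ s ∈ Set.Ioo (P.x i) (P.x (i + 1)),
    f s = f ((P.x i + P.x (i + 1)) / 2)

/-- The RDS integral of a step function with respect to the partition `P`:
`Σ_{i=0}^n f(x_i) μ_α({x_i}) + Σ_{i=1}^n c_i μ_α(I_i)`. -/
def stepInt (a b : ℝ) (α : ℝ → ℝ) (P : RDSPartition a b) (f : ℝ → ℝ) : ℝ :=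
  (∑ i ∈ Finset.range (P.n + 1), f (P.x i) * muPt a b α (P.x i)) +
    ∑ i ∈ Finset.range P.n,
      f ((P.x i + P.x (i + 1)) / 2) * muIoo a b α (P.x i) (P.x (i + 1))

/-- Upper envelope: infimum of RDS step integrals of step functions above `f` on `[a,b]`. -/
def upperRDS (a b : ℝ) (α f : ℝ → ℝ) : ℝ :=
  sInf { r | ∃ (u : ℝ → ℝ) (P : RDSPartition a b), IsStepOn a b u P ∧
    (∀ t ∈ Set.Icc a b, f t ≤ u t) ∧ r = stepInt a b α P u }

/-- Lower envelope: supremum of RDS step integrals of step functions below `f` on `[a,b]`. -/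
def lowerRDS (a b : ℝ) (α f : ℝ → ℝ) : ℝ :=
  sSup { r | ∃ (v : ℝ → ℝ) (P : RDSPartition a b), IsStepOn a b v P ∧
    (∀ t ∈ Set.Icc a b, v t ≤ f t) ∧ r = stepInt a b α P v }

/-- RDS integrability with respect to an increasing integrator. -/
def RDSIntegrableInc (a b : ℝ) (α f : ℝ → ℝ) : Prop :=
  lowerRDS a b α f = upperRDS a b α f

/-- The RDS integral with respect to an increasing integrator. -/
def RDSIntegralInc (a b : ℝ) (α f : ℝ → ℝ) : ℝ := upperRDS a b α f

/-- RDS integrability with respect to a BV integrator: some Jordan decomposition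
into increasing functions works. -/
def RDSIntegrable (a b : ℝ) (α f : ℝ → ℝ) : Prop :=
  ∃ αp αm : ℝ → ℝ, MonotoneOn αp (Set.Icc a b) ∧ MonotoneOn αm (Set.Icc a b) ∧
    (∀ t ∈ Set.Icc a b, α t = αp t - αm t) ∧
    RDSIntegrableInc a b αp f ∧ RDSIntegrableInc a b αm f

/-- The RDS integral with respect to a BV integrator. -/
def RDSIntegral (a b : ℝ) (α f : ℝ → ℝ) : ℝ :=
  if h : RDSIntegrable a b α f then
    RDSIntegralInc a b h.choose f - RDSIntegralInc a b h.choose_spec.choose f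
  else 0

/-- `f` is bounded on `[a,b]`. -/
def BddOn (a b : ℝ) (f : ℝ → ℝ) : Prop :=
  ∃ M : ℝ, ∀ t ∈ Set.Icc a b, |f t| ≤ M


end

/-! Write `α` as a difference of increasing functions on `[a, b]`, extended constantly outside
`[a, b]`. For such an increasing `β`, the Lebesgue–Stieltjes measure `μ` of `β` gives points and
open intervals of `[a, b]` exactly the masses `μ_β({t})` and `μ_β((c, d))`, so the RDS step
integral of a step function is its `μ`-integral; hence lower step integrals never exceed upper
ones. On the other hand, since `μ((y, c)) → 0` as `y → c⁻` and `μ((c, y)) → 0` as `y → c⁺`,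
Cousin's lemma gives a partition whose gaps all have mass at most `δ`. Bracketing `f` by the step
functions that agree with `f` at the nodes and equal its infimum, resp. supremum, on each gap, the
two step integrals differ by at most `Var f · δ`, because the oscillations of `f` on the gaps add
up to at most `Var f`. -/

open Set Filter Topology MeasureTheory Function

lemma csSup_eq_csInf_of_forall_exists_le {α : Type*} [Field α]
    [ConditionallyCompleteLinearOrder α] [IsStrictOrderedRing α] {L U : Set α}
    (hLU : ∀ l ∈ L, ∀ u ∈ U, l ≤ u) (h : ∀ ε > 0, ∃ l ∈ L, ∃ u ∈ U, u ≤ l + ε) :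
    sSup L = sInf U := by
  obtain ⟨l₀, hl₀, u₀, hu₀, -⟩ := h 1 one_pos
  refine le_antisymm (csSup_le ⟨l₀, hl₀⟩ fun l hl => le_csInf ⟨u₀, hu₀⟩ (hLU l hl))
    (le_of_forall_pos_le_add fun ε hε => ?_)
  obtain ⟨l, hl, u, hu, hul⟩ := h ε hε
  calc sInf U ≤ u := csInf_le ⟨l₀, fun u hu => hLU l₀ hl₀ u hu⟩ hu
    _ ≤ l + ε := hul
    _ ≤ sSup L + ε := by gcongr; exact le_csSup ⟨u₀, fun l hl => hLU l hl u₀ hu₀⟩ hl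

section BoundedVariation

variable {α : Type*} [LinearOrder α] {f : α → ℝ} {s : Set α}

lemma BoundedVariationOn.bddAbove_image (hf : BoundedVariationOn f s) : BddAbove (f '' s) := by
  rcases s.eq_empty_or_nonempty with rfl | ⟨x₀, hx₀⟩
  · simp
  · exact ⟨f x₀ + (eVariationOn f s).toReal,
      forall_mem_image.2 fun x hx => by linarith [hf.sub_le hx hx₀]⟩

lemma BoundedVariationOn.bddBelow_image (hf : BoundedVariationOn f s) : BddBelow (f '' s) := by
  rcases s.eq_empty_or_nonempty with rfl | ⟨x₀, hx₀⟩
  · simp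
  · exact ⟨f x₀ - (eVariationOn f s).toReal,
      forall_mem_image.2 fun x hx => by linarith [hf.sub_le hx₀ hx]⟩

lemma BoundedVariationOn.csSup_image_sub_csInf_image_le (hf : BoundedVariationOn f s)
    (hs : s.Nonempty) : sSup (f '' s) - sInf (f '' s) ≤ (eVariationOn f s).toReal := by
  have hinf : ∀ x ∈ s, f x - (eVariationOn f s).toReal ≤ sInf (f '' s) := fun x hx =>
    le_csInf (hs.image f) (forall_mem_image.2 fun y hy => by linarith [hf.sub_le hx hy])
  have hsup : sSup (f '' s) ≤ sInf (f '' s) + (eVariationOn f s).toReal :=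
    csSup_le (hs.image f) (forall_mem_image.2 fun x hx => by linarith [hinf x hx])
  linarith

end BoundedVariation

lemma StieltjesFunction.eventually_measure_Ioo_left_le (F : StieltjesFunction ℝ) {δ : ℝ}
    (hδ : 0 < δ) (c : ℝ) : ∀ᶠ y in 𝓝[<] c, F.measure (Ioo y c) ≤ ENNReal.ofReal δ := by
  filter_upwards [F.mono.tendsto_leftLim c (Ioi_mem_nhds (sub_lt_self _ hδ))] with y hy
  rw [F.measure_Ioo]
  exact ENNReal.ofReal_le_ofReal (by simp only [mem_preimage, mem_Ioi] at hy; linarith)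

lemma StieltjesFunction.eventually_measure_Ioo_right_le (F : StieltjesFunction ℝ) {δ : ℝ}
    (hδ : 0 < δ) (c : ℝ) : ∀ᶠ y in 𝓝[>] c, F.measure (Ioo c y) ≤ ENNReal.ofReal δ := by
  have hF : Tendsto F (𝓝[>] c) (𝓝 (F c)) :=
    (F.right_continuous c).mono_left (nhdsWithin_mono _ Ioi_subset_Ici_self)
  filter_upwards [hF (Iio_mem_nhds (lt_add_of_pos_right _ hδ))] with y hy
  rw [F.measure_Ioo]
  have hleft := F.mono.leftLim_le (le_refl y)
  exact ENNReal.ofReal_le_ofReal (by simp only [mem_preimage, mem_Iio] at hy; linarith)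

namespace RDSPartition

variable {a b : ℝ} (P : RDSPartition a b)

lemma strictMonoOn_x : StrictMonoOn P.x (Iic P.n) :=
  strictMonoOn_Iic_of_lt_succ P.mono

lemma x_le_x {i j : ℕ} (hij : i ≤ j) (hj : j ≤ P.n) : P.x i ≤ P.x j :=
  P.strictMonoOn_x.monotoneOn (hij.trans hj : i ≤ P.n) hj hij

lemma x_mem_Icc {i : ℕ} (hi : i ≤ P.n) : P.x i ∈ Icc a b :=
  ⟨P.first.symm.trans_le (P.x_le_x (Nat.zero_le i) hi), (P.x_le_x hi le_rfl).trans_eq P.last⟩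

lemma Icc_x_subset_Icc {i : ℕ} (hi : i < P.n) : Icc (P.x i) (P.x (i + 1)) ⊆ Icc a b :=
  Icc_subset_Icc (P.x_mem_Icc hi.le).1 (P.x_mem_Icc hi).2

lemma Ioo_x_subset_Icc {i : ℕ} (hi : i < P.n) : Ioo (P.x i) (P.x (i + 1)) ⊆ Icc a b :=
  Ioo_subset_Icc_self.trans (P.Icc_x_subset_Icc hi)

lemma mid_mem_Ioo {i : ℕ} (hi : i < P.n) :
    (P.x i + P.x (i + 1)) / 2 ∈ Ioo (P.x i) (P.x (i + 1)) := by
  have := P.mono i hi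
  constructor <;> linarith

lemma x_notMem_Ioo {k i : ℕ} (hk : k ≤ P.n) (hi : i < P.n) :
    P.x k ∉ Ioo (P.x i) (P.x (i + 1)) := fun ⟨hik, hki⟩ => by
  rcases le_or_gt k i with h | h
  · exact (P.x_le_x h hi.le).not_gt hik
  · exact (P.x_le_x h hk).not_gt hki

lemma eq_of_mem_Ioo_of_mem_Ioo {i j : ℕ} (hi : i < P.n) (hj : j < P.n) {t : ℝ}
    (hti : t ∈ Ioo (P.x i) (P.x (i + 1))) (htj : t ∈ Ioo (P.x j) (P.x (j + 1))) : i = j := by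
  rcases lt_trichotomy i j with h | h | h
  · exact absurd (hti.2.trans_le (P.x_le_x h hj.le)) htj.1.not_gt
  · exact h
  · exact absurd (htj.2.trans_le (P.x_le_x h hi.le)) hti.1.not_gt

lemma eq_x_or_mem_Ioo {t : ℝ} (ht : t ∈ Icc a b) :
    (∃ i ≤ P.n, t = P.x i) ∨ ∃ i < P.n, t ∈ Ioo (P.x i) (P.x (i + 1)) := by
  set k := Nat.findGreatest (fun i => P.x i ≤ t) P.n
  have hkn : k ≤ P.n := Nat.findGreatest_le P.n
  have hxk : P.x k ≤ t :=
    Nat.findGreatest_spec (P := fun i => P.x i ≤ t) (Nat.zero_le P.n) (P.first.trans_le ht.1)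
  rcases hxk.eq_or_lt with heq | hlt
  · exact Or.inl ⟨k, hkn, heq.symm⟩
  have hk : k < P.n := hkn.lt_of_ne fun h => (P.last ▸ h ▸ hlt).not_ge ht.2
  exact Or.inr ⟨k, hk, hlt, not_le.1 (Nat.findGreatest_is_greatest (Nat.lt_succ_self k) hk)⟩

def snoc {a y : ℝ} (P : RDSPartition a y) {c : ℝ} (hyc : y < c) : RDSPartition a c where
  n := P.n + 1
  x i := if i ≤ P.n then P.x i else c
  mono i hi := by
    rcases Nat.lt_succ_iff_lt_or_eq.1 hi with hi | rfl
    · simpa [hi.le, Nat.succ_le_of_lt hi] using P.mono i hi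
    · simpa [P.last] using hyc
  first := by simp [P.first]
  last := by simp

lemma forall_snoc {a y c : ℝ} (P : RDSPartition a y) (hyc : y < c) {Q : ℝ → ℝ → Prop}
    (hP : ∀ i < P.n, Q (P.x i) (P.x (i + 1))) (hyc' : Q y c) :
    ∀ i < (P.snoc hyc).n, Q ((P.snoc hyc).x i) ((P.snoc hyc).x (i + 1)) := by
  intro i hi
  rcases Nat.lt_succ_iff_lt_or_eq.1 hi with hi | rfl
  · simpa [snoc, hi.le, Nat.succ_le_of_lt hi] using hP i hi
  · simpa [snoc, P.last] using hyc'

/-- Cousin's lemma. -/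
lemma exists_forall_of_eventually {a b : ℝ} (hab : a ≤ b) {Q : ℝ → ℝ → Prop}
    (hleft : ∀ c, ∀ᶠ y in 𝓝[<] c, Q y c) (hright : ∀ c, ∀ᶠ y in 𝓝[>] c, Q c y) :
    ∃ P : RDSPartition a b, ∀ i < P.n, Q (P.x i) (P.x (i + 1)) := by
  let G (y : ℝ) : Prop := ∃ P : RDSPartition a y, ∀ i < P.n, Q (P.x i) (P.x (i + 1))
  have hG_snoc {y z : ℝ} (hyz : y < z) (hy : G y) (hQ : Q y z) : G z :=
    let ⟨P, hP⟩ := hy; ⟨P.snoc hyz, P.forall_snoc hyz hP hQ⟩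
  have hGa : G a := ⟨⟨0, fun _ => a, fun i hi => absurd hi (Nat.not_lt_zero i), rfl, rfl⟩,
    fun i hi => absurd hi (Nat.not_lt_zero i)⟩
  let S := {y ∈ Icc a b | G y}
  have haS : a ∈ S := ⟨left_mem_Icc.2 hab, hGa⟩
  have hS : BddAbove S := ⟨b, fun y hy => hy.1.2⟩
  set c := sSup S
  have hac : a ≤ c := le_csSup hS haS
  have hcb : c ≤ b := csSup_le ⟨a, haS⟩ fun y hy => hy.1.2
  have hGc : G c := by
    rcases hac.eq_or_lt with hac | hac
    · exact hac ▸ hGa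
    obtain ⟨w, hwc, hw⟩ := mem_nhdsLT_iff_exists_Ioo_subset.1 (hleft c)
    obtain ⟨y, hyS, hwy⟩ := exists_lt_of_lt_csSup ⟨a, haS⟩ (hwc : w < c)
    rcases (le_csSup hS hyS).eq_or_lt with rfl | hyc
    · exact hyS.2
    · exact hG_snoc hyc hyS.2 (hw ⟨hwy, hyc⟩)
  rcases hcb.eq_or_lt with hcb | hcb
  · exact hcb ▸ hGc
  obtain ⟨w, hcw, hw⟩ := mem_nhdsGT_iff_exists_Ioo_subset.1 (hright c)
  have hcw : c < w := hcw
  set z := min ((c + w) / 2) b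
  have hcz : c < z := lt_min (by linarith) hcb
  have hzw : z < w := (min_le_left _ _).trans_lt (by linarith)
  have hzS : z ∈ S := ⟨⟨hac.trans hcz.le, min_le_right _ _⟩, hG_snoc hcz hGc (hw ⟨hcz, hzw⟩)⟩
  exact absurd (le_csSup hS hzS) hcz.not_ge

section StepFun

noncomputable def stepFun (c d : ℕ → ℝ) : ℝ → ℝ := fun t =>
  (∑ i ∈ Finset.range (P.n + 1), ({P.x i} : Set ℝ).indicator (fun _ => c i) t) +
    ∑ i ∈ Finset.range P.n, (Ioo (P.x i) (P.x (i + 1))).indicator (fun _ => d i) t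

variable (c d : ℕ → ℝ)

lemma stepFun_x {k : ℕ} (hk : k ≤ P.n) : P.stepFun c d (P.x k) = c k := by
  have hnodes : ∑ i ∈ Finset.range (P.n + 1), ({P.x i} : Set ℝ).indicator (fun _ => c i) (P.x k)
      = c k := by
    rw [Finset.sum_eq_single_of_mem k (Finset.mem_range_succ_iff.2 hk)]
    · simp
    · intro i hi hik
      exact indicator_of_notMem (fun h => hik
        (P.strictMonoOn_x.injOn (Finset.mem_range_succ_iff.1 hi) hk h.symm)) _
  have hgaps : ∑ i ∈ Finset.range P.n,
      (Ioo (P.x i) (P.x (i + 1))).indicator (fun _ => d i) (P.x k) = 0 :=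
    Finset.sum_eq_zero fun i hi =>
      indicator_of_notMem (P.x_notMem_Ioo hk (Finset.mem_range.1 hi)) _
  rw [stepFun, hnodes, hgaps, add_zero]

lemma stepFun_of_mem_Ioo {i : ℕ} (hi : i < P.n) {t : ℝ} (ht : t ∈ Ioo (P.x i) (P.x (i + 1))) :
    P.stepFun c d t = d i := by
  have hnodes : ∑ j ∈ Finset.range (P.n + 1), ({P.x j} : Set ℝ).indicator (fun _ => c j) t
      = 0 :=
    Finset.sum_eq_zero fun j hj => indicator_of_notMem (fun h =>
      P.x_notMem_Ioo (Finset.mem_range_succ_iff.1 hj) hi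
        ((mem_singleton_iff.1 h : t = P.x j) ▸ ht)) _
  have hgaps : ∑ j ∈ Finset.range P.n,
      (Ioo (P.x j) (P.x (j + 1))).indicator (fun _ => d j) t = d i := by
    rw [Finset.sum_eq_single_of_mem i (Finset.mem_range.2 hi)]
    · exact indicator_of_mem ht _
    · intro j hj hji
      exact indicator_of_notMem
        (fun htj => hji (P.eq_of_mem_Ioo_of_mem_Ioo (Finset.mem_range.1 hj) hi htj ht)) _
  rw [stepFun, hnodes, hgaps, zero_add]

lemma stepFun_of_notMem_Icc {t : ℝ} (ht : t ∉ Icc a b) : P.stepFun c d t = 0 := by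
  have hnodes : ∑ i ∈ Finset.range (P.n + 1), ({P.x i} : Set ℝ).indicator (fun _ => c i) t
      = 0 :=
    Finset.sum_eq_zero fun i hi => indicator_of_notMem (fun h =>
      ht ((mem_singleton_iff.1 h : t = P.x i) ▸ P.x_mem_Icc (Finset.mem_range_succ_iff.1 hi))) _
  have hgaps : ∑ i ∈ Finset.range P.n,
      (Ioo (P.x i) (P.x (i + 1))).indicator (fun _ => d i) t = 0 :=
    Finset.sum_eq_zero fun i hi =>
      indicator_of_notMem (fun h => ht (P.Ioo_x_subset_Icc (Finset.mem_range.1 hi) h)) _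
  rw [stepFun, hnodes, hgaps, add_zero]

lemma isStepOn_stepFun : IsStepOn a b (P.stepFun c d) P := fun i hi s hs => by
  rw [P.stepFun_of_mem_Ioo c d hi hs, P.stepFun_of_mem_Ioo c d hi (P.mid_mem_Ioo hi)]

lemma stepFun_eqOn_of_isStepOn {u : ℝ → ℝ} (hu : IsStepOn a b u P) :
    EqOn (P.stepFun (fun i => u (P.x i)) (fun i => u ((P.x i + P.x (i + 1)) / 2))) u
      (Icc a b) := fun t ht => by
  rcases P.eq_x_or_mem_Ioo ht with ⟨i, hi, rfl⟩ | ⟨i, hi, hti⟩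
  · exact P.stepFun_x _ _ hi
  · rw [P.stepFun_of_mem_Ioo _ _ hi hti, hu i hi t hti]

lemma stepInt_stepFun (β : ℝ → ℝ) :
    stepInt a b β P (P.stepFun c d) =
      (∑ i ∈ Finset.range (P.n + 1), c i * muPt a b β (P.x i)) +
        ∑ i ∈ Finset.range P.n, d i * muIoo a b β (P.x i) (P.x (i + 1)) := by
  rw [stepInt]
  congr 1
  · exact Finset.sum_congr rfl fun i hi => by
      rw [P.stepFun_x c d (Finset.mem_range_succ_iff.1 hi)]
  · refine Finset.sum_congr rfl fun i hi => ?_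
    have hi := Finset.mem_range.1 hi
    rw [P.stepFun_of_mem_Ioo c d hi (P.mid_mem_Ioo hi)]

variable (μ : Measure ℝ) [IsFiniteMeasure μ]

lemma integrable_stepFun : Integrable (P.stepFun c d) μ :=
  (integrable_finsetSum _ fun _ _ =>
      (integrable_const _).indicator (measurableSet_singleton _)).add
    (integrable_finsetSum _ fun _ _ => (integrable_const _).indicator measurableSet_Ioo)

lemma integral_stepFun :
    ∫ t, P.stepFun c d t ∂μ =
      (∑ i ∈ Finset.range (P.n + 1), c i * μ.real {P.x i}) +
        ∑ i ∈ Finset.range P.n, d i * μ.real (Ioo (P.x i) (P.x (i + 1))) := by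
  have hnodes (i : ℕ) : Integrable (({P.x i} : Set ℝ).indicator fun _ => c i) μ :=
    (integrable_const _).indicator (measurableSet_singleton _)
  have hgaps (i : ℕ) : Integrable ((Ioo (P.x i) (P.x (i + 1))).indicator fun _ => d i) μ :=
    (integrable_const _).indicator measurableSet_Ioo
  simp only [stepFun]
  rw [integral_add (integrable_finsetSum _ fun i _ => hnodes i)
      (integrable_finsetSum _ fun i _ => hgaps i),
    integral_finsetSum _ fun i _ => hnodes i, integral_finsetSum _ fun i _ => hgaps i]
  simp only [integral_indicator_const _ (measurableSet_singleton _),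
    integral_indicator_const _ measurableSet_Ioo, smul_eq_mul, mul_comm]

end StepFun

variable (f : ℝ → ℝ)

lemma sum_eVariationOn_Icc :
    ∑ i ∈ Finset.range P.n, eVariationOn f (Icc (P.x i) (P.x (i + 1))) =
      eVariationOn f (Icc a b) := by
  suffices h : ∀ k ≤ P.n, ∑ i ∈ Finset.range k, eVariationOn f (Icc (P.x i) (P.x (i + 1))) =
      eVariationOn f (Icc a (P.x k)) by
    rw [h P.n le_rfl, P.last]
  intro k hk
  induction k with
  | zero => rw [Finset.sum_range_zero, P.first,
      eVariationOn.subsingleton f (subsingleton_Icc_of_ge le_rfl)]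
  | succ k ih =>
    rw [Finset.sum_range_succ, ih (Nat.le_of_succ_le hk)]
    simpa only [univ_inter] using eVariationOn.Icc_add_Icc f (s := univ)
      (P.x_mem_Icc (Nat.le_of_succ_le hk)).1 (P.mono k hk).le (mem_univ _)

noncomputable def lowerStepFun : ℝ → ℝ :=
  P.stepFun (fun i => f (P.x i)) fun i => sInf (f '' Ioo (P.x i) (P.x (i + 1)))

noncomputable def upperStepFun : ℝ → ℝ :=
  P.stepFun (fun i => f (P.x i)) fun i => sSup (f '' Ioo (P.x i) (P.x (i + 1)))

variable {f}

lemma lowerStepFun_le (hf : BddBelow (f '' Icc a b)) {t : ℝ} (ht : t ∈ Icc a b) :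
    P.lowerStepFun f t ≤ f t := by
  rcases P.eq_x_or_mem_Ioo ht with ⟨i, hi, rfl⟩ | ⟨i, hi, hti⟩
  · rw [lowerStepFun, P.stepFun_x _ _ hi]
  · rw [lowerStepFun, P.stepFun_of_mem_Ioo _ _ hi hti]
    exact csInf_le (hf.mono (image_mono (P.Ioo_x_subset_Icc hi))) (mem_image_of_mem f hti)

lemma le_upperStepFun (hf : BddAbove (f '' Icc a b)) {t : ℝ} (ht : t ∈ Icc a b) :
    f t ≤ P.upperStepFun f t := by
  rcases P.eq_x_or_mem_Ioo ht with ⟨i, hi, rfl⟩ | ⟨i, hi, hti⟩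
  · rw [upperStepFun, P.stepFun_x _ _ hi]
  · rw [upperStepFun, P.stepFun_of_mem_Ioo _ _ hi hti]
    exact le_csSup (hf.mono (image_mono (P.Ioo_x_subset_Icc hi))) (mem_image_of_mem f hti)

lemma stepInt_upperStepFun_sub_stepInt_lowerStepFun_le (hf : BoundedVariationOn f (Icc a b))
    (β : ℝ → ℝ) {δ : ℝ} (hP : ∀ i < P.n, muIoo a b β (P.x i) (P.x (i + 1)) ∈ Icc 0 δ) :
    stepInt a b β P (P.upperStepFun f) - stepInt a b β P (P.lowerStepFun f) ≤
      (eVariationOn f (Icc a b)).toReal * δ := by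
  have hosc : ∀ i < P.n,
      sSup (f '' Ioo (P.x i) (P.x (i + 1))) - sInf (f '' Ioo (P.x i) (P.x (i + 1))) ≤
        (eVariationOn f (Icc (P.x i) (P.x (i + 1)))).toReal :=
    fun i hi => ((hf.mono (P.Ioo_x_subset_Icc hi)).csSup_image_sub_csInf_image_le
      ⟨_, P.mid_mem_Ioo hi⟩).trans (ENNReal.toReal_mono
        (hf.mono (P.Icc_x_subset_Icc hi))
        (eVariationOn.mono f Ioo_subset_Icc_self))
  rw [upperStepFun, lowerStepFun, stepInt_stepFun, stepInt_stepFun, add_sub_add_left_eq_sub,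
    ← Finset.sum_sub_distrib, ← P.sum_eVariationOn_Icc,
    ENNReal.toReal_sum fun i hi => hf.mono (P.Icc_x_subset_Icc (Finset.mem_range.1 hi)),
    Finset.sum_mul]
  refine Finset.sum_le_sum fun i hi => ?_
  obtain ⟨hm₀, hmδ⟩ := hP i (Finset.mem_range.1 hi)
  rw [← sub_mul]
  exact mul_le_mul (hosc i (Finset.mem_range.1 hi)) hmδ hm₀ ENNReal.toReal_nonneg

end RDSPartition

section Stieltjes

variable {a b : ℝ} {β : ℝ → ℝ}

lemma rLim_eq_rightLim (hβ : Monotone β) (hcb : ∀ t, b ≤ t → β t = β b) {t : ℝ} (ht : t ≤ b) :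
    rLim b β t = rightLim β t := by
  rw [rLim]
  split_ifs with htb
  · rfl
  obtain rfl : t = b := le_antisymm ht (not_lt.1 htb)
  exact le_antisymm (hβ.le_rightLim le_rfl)
    ((hβ.rightLim_le (lt_add_one t)).trans_eq (hcb _ (le_add_of_nonneg_right zero_le_one)))

lemma lLim_eq_leftLim (hβ : Monotone β) (hca : ∀ t, t ≤ a → β t = β a) {t : ℝ} (ht : a ≤ t) :
    lLim a β t = leftLim β t := by
  rw [lLim]
  split_ifs with hat
  · rfl
  obtain rfl : t = a := le_antisymm (not_lt.1 hat) ht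
  exact le_antisymm ((hca _ (sub_le_self t zero_le_one)).symm.trans_le
    (hβ.le_leftLim (sub_one_lt t))) (hβ.leftLim_le le_rfl)

lemma isFiniteMeasure_stieltjesFunction (hβ : Monotone β) (hca : ∀ t, t ≤ a → β t = β a)
    (hcb : ∀ t, b ≤ t → β t = β b) : IsFiniteMeasure hβ.stieltjesFunction.measure := by
  refine hβ.stieltjesFunction.isFiniteMeasure_of_forall_abs_le (C := |β a| + |β b|) fun t => ?_
  have hlow : β a ≤ rightLim β t :=
    (hca _ (min_le_right t a)).symm.trans_le (hβ.le_rightLim (min_le_left t a))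
  have hup : rightLim β t ≤ β b :=
    (hβ.rightLim_le ((le_max_left t b).trans_lt (lt_add_one _))).trans_eq
      (hcb _ ((le_max_right t b).trans (le_add_of_nonneg_right zero_le_one)))
  rw [hβ.stieltjesFunction_eq, abs_le]
  constructor <;> linarith [neg_abs_le (β a), le_abs_self (β b), abs_nonneg (β a),
    abs_nonneg (β b)]

lemma leftLim_stieltjesFunction (hβ : Monotone β) (t : ℝ) :
    leftLim hβ.stieltjesFunction t = leftLim β t :=
  leftLim_rightLim (hβ.tendsto_leftLim t)

lemma muPt_eq_measureReal (hβ : Monotone β) (hca : ∀ t, t ≤ a → β t = β a)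
    (hcb : ∀ t, b ≤ t → β t = β b) {t : ℝ} (ht : t ∈ Icc a b) :
    muPt a b β t = hβ.stieltjesFunction.measure.real {t} := by
  rw [measureReal_def, StieltjesFunction.measure_singleton, leftLim_stieltjesFunction,
    hβ.stieltjesFunction_eq, ENNReal.toReal_ofReal (sub_nonneg.2 (hβ.leftLim_le_rightLim le_rfl)),
    muPt, rLim_eq_rightLim hβ hcb ht.2, lLim_eq_leftLim hβ hca ht.1]

lemma muIoo_eq_measureReal (hβ : Monotone β) (hca : ∀ t, t ≤ a → β t = β a)
    (hcb : ∀ t, b ≤ t → β t = β b) {c d : ℝ} (hac : a ≤ c) (hcd : c < d) (hdb : d ≤ b) :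
    muIoo a b β c d = hβ.stieltjesFunction.measure.real (Ioo c d) := by
  rw [measureReal_def, StieltjesFunction.measure_Ioo, leftLim_stieltjesFunction,
    hβ.stieltjesFunction_eq, ENNReal.toReal_ofReal (sub_nonneg.2 (hβ.rightLim_le_leftLim hcd)),
    muIoo, rLim_eq_rightLim hβ hcb (hcd.le.trans hdb), lLim_eq_leftLim hβ hca (hac.trans hcd.le)]

lemma stepInt_eq_integral_stepFun (hβ : Monotone β) (hca : ∀ t, t ≤ a → β t = β a)
    (hcb : ∀ t, b ≤ t → β t = β b) (P : RDSPartition a b) (u : ℝ → ℝ) :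
    stepInt a b β P u = ∫ t, P.stepFun (fun i => u (P.x i))
      (fun i => u ((P.x i + P.x (i + 1)) / 2)) t ∂hβ.stieltjesFunction.measure := by
  have := isFiniteMeasure_stieltjesFunction hβ hca hcb
  rw [P.integral_stepFun, stepInt]
  congr 1
  · refine Finset.sum_congr rfl fun i hi => ?_
    rw [muPt_eq_measureReal hβ hca hcb (P.x_mem_Icc (Finset.mem_range_succ_iff.1 hi))]
  · refine Finset.sum_congr rfl fun i hi => ?_
    have hi := Finset.mem_range.1 hi
    rw [muIoo_eq_measureReal hβ hca hcb (P.x_mem_Icc hi.le).1 (P.mono i hi) (P.x_mem_Icc hi).2]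

lemma stepInt_mono (hβ : Monotone β) (hca : ∀ t, t ≤ a → β t = β a)
    (hcb : ∀ t, b ≤ t → β t = β b) {u v : ℝ → ℝ} {P Q : RDSPartition a b}
    (hu : IsStepOn a b u P) (hv : IsStepOn a b v Q) (hvu : ∀ t ∈ Icc a b, v t ≤ u t) :
    stepInt a b β Q v ≤ stepInt a b β P u := by
  have := isFiniteMeasure_stieltjesFunction hβ hca hcb
  rw [stepInt_eq_integral_stepFun hβ hca hcb P u, stepInt_eq_integral_stepFun hβ hca hcb Q v]
  refine integral_mono (Q.integrable_stepFun _ _ _) (P.integrable_stepFun _ _ _) fun t => ?_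
  by_cases ht : t ∈ Icc a b
  · rw [Q.stepFun_eqOn_of_isStepOn hv ht, P.stepFun_eqOn_of_isStepOn hu ht]
    exact hvu t ht
  · rw [P.stepFun_of_notMem_Icc _ _ ht, Q.stepFun_of_notMem_Icc _ _ ht]

end Stieltjes

section Integrability

variable {a b : ℝ} {β f : ℝ → ℝ}

lemma exists_partition_muIoo_mem_Icc (hab : a ≤ b) (hβ : Monotone β)
    (hca : ∀ t, t ≤ a → β t = β a) (hcb : ∀ t, b ≤ t → β t = β b) {δ : ℝ} (hδ : 0 < δ) :
    ∃ P : RDSPartition a b, ∀ i < P.n, muIoo a b β (P.x i) (P.x (i + 1)) ∈ Icc 0 δ := by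
  obtain ⟨P, hP⟩ := RDSPartition.exists_forall_of_eventually hab
    (hβ.stieltjesFunction.eventually_measure_Ioo_left_le hδ)
    (hβ.stieltjesFunction.eventually_measure_Ioo_right_le hδ)
  refine ⟨P, fun i hi => ?_⟩
  rw [muIoo_eq_measureReal hβ hca hcb (P.x_mem_Icc hi.le).1 (P.mono i hi) (P.x_mem_Icc hi).2]
  exact ⟨measureReal_nonneg, ENNReal.toReal_le_of_le_ofReal hδ.le (hP i hi)⟩

lemma rdsIntegrableInc_of_monotone (hab : a ≤ b) (hβ : Monotone β)
    (hca : ∀ t, t ≤ a → β t = β a) (hcb : ∀ t, b ≤ t → β t = β b)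
    (hf : BoundedVariationOn f (Icc a b)) : RDSIntegrableInc a b β f := by
  refine csSup_eq_csInf_of_forall_exists_le ?_ fun ε hε => ?_
  · rintro _ ⟨v, Q, hv, hvf, rfl⟩ _ ⟨u, P, hu, hfu, rfl⟩
    exact stepInt_mono hβ hca hcb hu hv fun t ht => (hvf t ht).trans (hfu t ht)
  set V := (eVariationOn f (Icc a b)).toReal
  have hV : 0 ≤ V := ENNReal.toReal_nonneg
  obtain ⟨P, hP⟩ := exists_partition_muIoo_mem_Icc hab hβ hca hcb (δ := ε / (V + 1))
    (div_pos hε (by linarith))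
  refine ⟨_, ⟨P.lowerStepFun f, P, P.isStepOn_stepFun _ _,
      fun t ht => P.lowerStepFun_le hf.bddBelow_image ht, rfl⟩,
    _, ⟨P.upperStepFun f, P, P.isStepOn_stepFun _ _,
      fun t ht => P.le_upperStepFun hf.bddAbove_image ht, rfl⟩, ?_⟩
  have hgap := P.stepInt_upperStepFun_sub_stepInt_lowerStepFun_le hf β hP
  have hVδ : V * (ε / (V + 1)) ≤ ε := by
    rw [← mul_div_assoc, div_le_iff₀ (by linarith)]
    nlinarith
  linarith

lemma MonotoneOn.monotone_IccExtend (hab : a ≤ b) (hβ : MonotoneOn β (Icc a b)) :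
    Monotone (IccExtend hab ((Icc a b).domRestrict β)) :=
  (monotoneOn_iff_monotone.1 hβ).IccExtend hab

lemma MonotoneOn.rdsIntegrableInc_IccExtend (hab : a ≤ b) (hβ : MonotoneOn β (Icc a b))
    (hf : BoundedVariationOn f (Icc a b)) :
    RDSIntegrableInc a b (IccExtend hab ((Icc a b).domRestrict β)) f :=
  rdsIntegrableInc_of_monotone hab (hβ.monotone_IccExtend hab)
    (fun _ ht => by rw [IccExtend_of_le_left _ _ ht, IccExtend_left])
    (fun _ ht => by rw [IccExtend_of_right_le _ _ ht, IccExtend_right]) hf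

end Integrability

theorem stmt16 (a b : ℝ) (hab : a < b) (α f : ℝ → ℝ)
    (hf : BoundedVariationOn f (Set.Icc a b))
    (hα : BoundedVariationOn α (Set.Icc a b)) :
    RDSIntegrable a b α f := by
  obtain ⟨p, q, hp, hq, rfl⟩ := hα.locallyBoundedVariationOn.exists_monotoneOn_sub_monotoneOn
  refine ⟨IccExtend hab.le ((Icc a b).domRestrict p), IccExtend hab.le ((Icc a b).domRestrict q),
    (hp.monotone_IccExtend hab.le).monotoneOn _, (hq.monotone_IccExtend hab.le).monotoneOn _,
    fun t ht => ?_, hp.rdsIntegrableInc_IccExtend hab.le hf,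
    hq.rdsIntegrableInc_IccExtend hab.le hf⟩
  simp [IccExtend_of_mem _ _ ht]
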